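/- arXiv:0807.4602 — 2 statements merged into one kernel-verified Lean document; each statement's English description precedes it below -/
import Mathlib

section
/- For every real λ with |λ| < 1 there exists an (n+1)×(n+1) complex matrix c satisfying cᴴ η c = η, of block-diagonal form c = diag(I_{n−1}, B) for some 2×2 complex block B (so that c commutes with every matrix diag(A,1,1) with A an (n−1)×(n−1) unitary matrix), such that c⁻¹ X_λ c = √(1−λ²) · X. -/
open Matrix Complex

/-- The signature matrix `η = diag(1,…,1,−1)` of the Hermitian form of signature `(n,1)`. -/
noncomputable def etaMat (n : ℕ) : Matrix (Fin (n+1)) (Fin (n+1)) ℂ :=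
  Matrix.diagonal (fun i => if (i : ℕ) = n then -1 else 1)

/-- The matrix `X` whose only nonzero entries are `X_{n,n+1} = X_{n+1,n} = 1/2`
(1-indexed), i.e. positions `(n-1, n)` and `(n, n-1)` in 0-indexed terms. -/
noncomputable def Xmat (n : ℕ) : Matrix (Fin (n+1)) (Fin (n+1)) ℂ :=
  fun i j =>
    if (i : ℕ) = n - 1 ∧ (j : ℕ) = n then 1/2
    else if (i : ℕ) = n ∧ (j : ℕ) = n - 1 then 1/2
    else 0

/-- The matrix `V = diag(0,…,0, i/2, −i/2)`. -/
noncomputable def Vmat (n : ℕ) : Matrix (Fin (n+1)) (Fin (n+1)) ℂ :=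
  Matrix.diagonal (fun i =>
    if (i : ℕ) = n - 1 then Complex.I/2
    else if (i : ℕ) = n then -Complex.I/2
    else 0)

/-- The matrix `U` whose only nonzero entries form the bottom-right `2×2` block
`[[−i/2, −i/2],[i/2, i/2]]`. -/
noncomputable def Umat (n : ℕ) : Matrix (Fin (n+1)) (Fin (n+1)) ℂ :=
  fun i j =>
    if (i : ℕ) = n - 1 ∧ (j : ℕ) = n - 1 then -Complex.I/2
    else if (i : ℕ) = n - 1 ∧ (j : ℕ) = n then -Complex.I/2
    else if (i : ℕ) = n ∧ (j : ℕ) = n - 1 then Complex.I/2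
    else if (i : ℕ) = n ∧ (j : ℕ) = n then Complex.I/2
    else 0

/-- `diag(A,1,1)`: the `(n+1)×(n+1)` block-diagonal matrix with block `A` in the first
`n−1` rows/columns and entries `1` in the last two diagonal positions. -/
noncomputable def diagA (n : ℕ) (A : Matrix (Fin (n-1)) (Fin (n-1)) ℂ) :
    Matrix (Fin (n+1)) (Fin (n+1)) ℂ :=
  fun i j =>
    if hi : (i : ℕ) < n - 1 then
      if hj : (j : ℕ) < n - 1 then A ⟨(i : ℕ), hi⟩ ⟨(j : ℕ), hj⟩ else 0
    else if i = j then 1 else 0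

/-- `diag(I_{n−1}, B)`: the `(n+1)×(n+1)` block-diagonal matrix with identity block
in the first `n−1` rows/columns and the `2×2` block `B` in the last two rows/columns. -/
noncomputable def diagB (n : ℕ) (B : Matrix (Fin 2) (Fin 2) ℂ) :
    Matrix (Fin (n+1)) (Fin (n+1)) ℂ :=
  fun i j =>
    if h : (i : ℕ) < n - 1 ∨ (j : ℕ) < n - 1 then (if i = j then 1 else 0)
    else B ⟨(i : ℕ) - (n-1), by have := i.isLt; omega⟩ ⟨(j : ℕ) - (n-1), by have := j.isLt; omega⟩

noncomputable def corner (n : ℕ) (M : Matrix (Fin 2) (Fin 2) ℂ) :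
    Matrix (Fin (n+1)) (Fin (n+1)) ℂ :=
  fun i j =>
    if h : (i : ℕ) < n - 1 ∨ (j : ℕ) < n - 1 then 0
    else M ⟨(i : ℕ) - (n-1), by have := i.isLt; omega⟩ ⟨(j : ℕ) - (n-1), by have := j.isLt; omega⟩

section
variable {n : ℕ}

def pIdx (n : ℕ) : Fin (n+1) := ⟨n-1, by omega⟩
def qIdx (n : ℕ) : Fin (n+1) := ⟨n, by omega⟩

@[simp] lemma pIdx_val : (pIdx n : ℕ) = n - 1 := rfl
@[simp] lemma qIdx_val : (qIdx n : ℕ) = n := rfl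

lemma sum_split (hn : 1 ≤ n) (f : Fin (n+1) → ℂ)
    (h : ∀ k : Fin (n+1), (k:ℕ) < n-1 → f k = 0) :
    ∑ k, f k = f (pIdx n) + f (qIdx n) := by
  rw [← Finset.sum_pair (a := pIdx n) (b := qIdx n)
    (by simp [pIdx, qIdx, Fin.ext_iff]; omega)]
  refine (Finset.sum_subset (Finset.subset_univ _) ?_).symm
  intro x _ hx
  apply h
  simp [pIdx, qIdx, Fin.ext_iff] at hx
  have := x.isLt
  omega

lemma diagB_low_left {i j : Fin (n+1)} (hi : (i:ℕ) < n - 1) (B : Matrix (Fin 2) (Fin 2) ℂ) :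
    diagB n B i j = if i = j then 1 else 0 := dif_pos (Or.inl hi)

lemma diagB_low_right {i j : Fin (n+1)} (hj : (j:ℕ) < n - 1) (B : Matrix (Fin 2) (Fin 2) ℂ) :
    diagB n B i j = if i = j then 1 else 0 := dif_pos (Or.inr hj)

lemma diagB_hi {i j : Fin (n+1)} (hi : ¬ (i:ℕ) < n - 1) (hj : ¬ (j:ℕ) < n - 1)
    (B : Matrix (Fin 2) (Fin 2) ℂ) :
    diagB n B i j = B ⟨(i : ℕ) - (n-1), by have := i.isLt; omega⟩
      ⟨(j : ℕ) - (n-1), by have := j.isLt; omega⟩ := dif_neg (by omega)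

lemma corner_low_left {i j : Fin (n+1)} (hi : (i:ℕ) < n - 1) (M : Matrix (Fin 2) (Fin 2) ℂ) :
    corner n M i j = 0 := dif_pos (Or.inl hi)

lemma corner_low_right {i j : Fin (n+1)} (hj : (j:ℕ) < n - 1) (M : Matrix (Fin 2) (Fin 2) ℂ) :
    corner n M i j = 0 := dif_pos (Or.inr hj)

lemma corner_hi {i j : Fin (n+1)} (hi : ¬ (i:ℕ) < n - 1) (hj : ¬ (j:ℕ) < n - 1)
    (M : Matrix (Fin 2) (Fin 2) ℂ) :
    corner n M i j = M ⟨(i : ℕ) - (n-1), by have := i.isLt; omega⟩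
      ⟨(j : ℕ) - (n-1), by have := j.isLt; omega⟩ := dif_neg (by omega)

lemma pIdx_not_low : ¬ ((pIdx n : ℕ) < n - 1) := by simp
lemma qIdx_not_low : ¬ ((qIdx n : ℕ) < n - 1) := by simp

lemma pIdx_blk (h : (pIdx n : ℕ) - (n-1) < 2) : (⟨(pIdx n : ℕ) - (n-1), h⟩ : Fin 2) = 0 := by
  apply Fin.ext; simp

lemma qIdx_blk (hn : 1 ≤ n) (h : (qIdx n : ℕ) - (n-1) < 2) : (⟨(qIdx n : ℕ) - (n-1), h⟩ : Fin 2) = 1 := by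
  apply Fin.ext; simp; omega

lemma ne_p_of_low {i : Fin (n+1)} (hi : (i:ℕ) < n - 1) : i ≠ pIdx n := by
  simp [Fin.ext_iff]; omega
lemma p_ne_of_low {i : Fin (n+1)} (hi : (i:ℕ) < n - 1) : pIdx n ≠ i := (ne_p_of_low hi).symm
lemma ne_q_of_low {i : Fin (n+1)} (hi : (i:ℕ) < n - 1) : i ≠ qIdx n := by
  simp [Fin.ext_iff]; omega
lemma q_ne_of_low {i : Fin (n+1)} (hi : (i:ℕ) < n - 1) : qIdx n ≠ i := (ne_q_of_low hi).symm

lemma diagB_mul_diagB (hn : 1 ≤ n) (B C : Matrix (Fin 2) (Fin 2) ℂ) :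
    diagB n B * diagB n C = diagB n (B * C) := by
  ext i j
  rw [Matrix.mul_apply]
  by_cases hi : (i:ℕ) < n - 1
  · rw [Finset.sum_eq_single i
      (fun k _ hk => by rw [diagB_low_left hi, if_neg (fun h => hk h.symm), zero_mul])
      (by simp)]
    rw [diagB_low_left hi, if_pos rfl, one_mul]
    rw [diagB_low_left hi, diagB_low_left hi]
  · rw [sum_split hn _ (fun k hk => by
      rw [diagB_low_right hk, if_neg (by simp [Fin.ext_iff]; omega), zero_mul])]
    have hi' := i.isLt
    by_cases hj : (j:ℕ) < n - 1
    · rw [diagB_low_right hj, diagB_low_right hj, diagB_low_right hj,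
        if_neg (p_ne_of_low hj), if_neg (q_ne_of_low hj),
        if_neg (by simp [Fin.ext_iff]; omega), mul_zero, mul_zero, add_zero]
    · have hj' := j.isLt
      rw [diagB_hi hi pIdx_not_low, diagB_hi hi qIdx_not_low,
        diagB_hi pIdx_not_low hj, diagB_hi qIdx_not_low hj, diagB_hi hi hj,
        pIdx_blk, qIdx_blk hn, Matrix.mul_apply, Fin.sum_univ_two]

lemma diagB_one (hn : 1 ≤ n) : diagB n 1 = 1 := by
  ext i j
  by_cases h : (i:ℕ) < n - 1 ∨ (j:ℕ) < n - 1
  · rw [show diagB n 1 i j = if i = j then 1 else 0 from dif_pos h, Matrix.one_apply]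
  · rw [not_or] at h
    have := i.isLt; have := j.isLt
    rw [diagB_hi h.1 h.2, Matrix.one_apply, Matrix.one_apply]
    simp only [Fin.ext_iff]
    split_ifs with h1 h2 h2 <;> first | rfl | (exfalso; omega)

lemma diagB_conjT (B : Matrix (Fin 2) (Fin 2) ℂ) :
    (diagB n B)ᴴ = diagB n Bᴴ := by
  ext i j
  rw [Matrix.conjTranspose_apply]
  by_cases h : (i:ℕ) < n - 1 ∨ (j:ℕ) < n - 1
  · rw [show diagB n B j i = if j = i then 1 else 0 from dif_pos h.symm,
      show diagB n Bᴴ i j = if i = j then 1 else 0 from dif_pos h]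
    by_cases hij : i = j
    · rw [if_pos hij.symm, if_pos hij]; simp
    · rw [if_neg (fun hh => hij hh.symm), if_neg hij]; simp
  · rw [not_or] at h
    rw [diagB_hi h.2 h.1, diagB_hi h.1 h.2, Matrix.conjTranspose_apply]

lemma diagB_mul_corner (hn : 1 ≤ n) (B M : Matrix (Fin 2) (Fin 2) ℂ) :
    diagB n B * corner n M = corner n (B * M) := by
  ext i j
  rw [Matrix.mul_apply]
  by_cases hj : (j:ℕ) < n - 1
  · rw [Finset.sum_eq_zero (fun k _ => by rw [corner_low_right hj, mul_zero]),
      corner_low_right hj]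
  · rw [sum_split hn _ (fun k hk => by rw [corner_low_left hk, mul_zero])]
    by_cases hi : (i:ℕ) < n - 1
    · rw [diagB_low_left hi, diagB_low_left hi, if_neg (ne_p_of_low hi),
        if_neg (ne_q_of_low hi), zero_mul, zero_mul, add_zero, corner_low_left hi]
    · have hi' := i.isLt; have hj' := j.isLt
      rw [diagB_hi hi pIdx_not_low, diagB_hi hi qIdx_not_low,
        corner_hi pIdx_not_low hj, corner_hi qIdx_not_low hj, corner_hi hi hj,
        pIdx_blk, qIdx_blk hn, Matrix.mul_apply, Fin.sum_univ_two]

lemma corner_mul_diagB (hn : 1 ≤ n) (M B : Matrix (Fin 2) (Fin 2) ℂ) :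
    corner n M * diagB n B = corner n (M * B) := by
  ext i j
  rw [Matrix.mul_apply]
  by_cases hi : (i:ℕ) < n - 1
  · rw [Finset.sum_eq_zero (fun k _ => by rw [corner_low_left hi, zero_mul]),
      corner_low_left hi]
  · rw [sum_split hn _ (fun k hk => by rw [corner_low_right hk, zero_mul])]
    by_cases hj : (j:ℕ) < n - 1
    · rw [diagB_low_right hj, diagB_low_right hj, if_neg (p_ne_of_low hj),
        if_neg (q_ne_of_low hj), mul_zero, mul_zero, add_zero, corner_low_right hj]
    · have hi' := i.isLt; have hj' := j.isLt
      rw [corner_hi hi pIdx_not_low, corner_hi hi qIdx_not_low,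
        diagB_hi pIdx_not_low hj, diagB_hi qIdx_not_low hj, corner_hi hi hj,
        pIdx_blk, qIdx_blk hn, Matrix.mul_apply, Fin.sum_univ_two]

lemma corner_smul (a : ℂ) (M : Matrix (Fin 2) (Fin 2) ℂ) :
    corner n (a • M) = a • corner n M := by
  ext i j
  rw [Matrix.smul_apply]
  by_cases h : (i:ℕ) < n - 1 ∨ (j:ℕ) < n - 1
  · rw [show corner n (a • M) i j = 0 from dif_pos h,
      show corner n M i j = 0 from dif_pos h, smul_zero]
  · rw [not_or] at h
    rw [corner_hi h.1 h.2, corner_hi h.1 h.2, Matrix.smul_apply]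

lemma diagA_low {i j : Fin (n+1)} (hi : (i:ℕ) < n - 1) (A : Matrix (Fin (n-1)) (Fin (n-1)) ℂ) :
    diagA n A i j = if hj : (j:ℕ) < n - 1 then A ⟨(i:ℕ), hi⟩ ⟨(j:ℕ), hj⟩ else 0 := dif_pos hi

lemma diagA_hi {i j : Fin (n+1)} (hi : ¬ (i:ℕ) < n - 1) (A : Matrix (Fin (n-1)) (Fin (n-1)) ℂ) :
    diagA n A i j = if i = j then 1 else 0 := dif_neg hi

lemma diagB_comm_diagA (hn : 1 ≤ n) (B : Matrix (Fin 2) (Fin 2) ℂ)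
    (A : Matrix (Fin (n-1)) (Fin (n-1)) ℂ) :
    diagB n B * diagA n A = diagA n A * diagB n B := by
  ext i j
  rw [Matrix.mul_apply, Matrix.mul_apply]
  by_cases hi : (i:ℕ) < n - 1
  · rw [Finset.sum_eq_single i
      (fun k _ hk => by rw [diagB_low_left hi, if_neg (fun h => hk h.symm), zero_mul])
      (by simp)]
    rw [diagB_low_left hi, if_pos rfl, one_mul]
    by_cases hj : (j:ℕ) < n - 1
    · rw [Finset.sum_eq_single j
        (fun k _ hk => by
          by_cases hk2 : (k:ℕ) < n - 1
          · rw [diagB_low_left hk2, if_neg hk, mul_zero]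
          · rw [diagA_low hi, dif_neg hk2, zero_mul])
        (by simp)]
      rw [diagB_low_left hj, if_pos rfl, mul_one]
    · rw [Finset.sum_eq_zero (fun k _ => by
        by_cases hk2 : (k:ℕ) < n - 1
        · rw [diagB_low_left hk2, if_neg (by simp [Fin.ext_iff]; omega), mul_zero]
        · rw [diagA_low hi, dif_neg hk2, zero_mul])]
      rw [diagA_low hi, dif_neg hj]
  · rw [sum_split hn _ (fun k hk => by
      rw [diagB_low_right hk, if_neg (by simp [Fin.ext_iff]; omega), zero_mul])]
    rw [Finset.sum_eq_single i
      (fun k _ hk => by rw [diagA_hi hi, if_neg (fun h => hk h.symm), zero_mul])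
      (by simp)]
    rw [diagA_hi hi, if_pos rfl, one_mul]
    rw [diagA_hi pIdx_not_low, diagA_hi qIdx_not_low]
    have hi' := i.isLt
    by_cases hj : (j:ℕ) < n - 1
    · rw [if_neg (p_ne_of_low hj), if_neg (q_ne_of_low hj), mul_zero, mul_zero, add_zero,
        diagB_low_right hj, if_neg (by simp [Fin.ext_iff]; omega)]
    · have hj' := j.isLt
      have : (j:ℕ) = n - 1 ∨ (j:ℕ) = n := by omega
      rcases this with h | h
      · have hjp : j = pIdx n := Fin.ext (by simpa using h)
        subst hjp
        rw [if_pos rfl, if_neg (by simp [Fin.ext_iff]; omega), mul_one, mul_zero, add_zero,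
          diagB_hi hi pIdx_not_low, pIdx_blk]
      · have hjq : j = qIdx n := Fin.ext (by simpa using h)
        subst hjq
        rw [if_pos rfl, if_neg (by simp [Fin.ext_iff]; omega), mul_one, mul_zero, zero_add,
          diagB_hi hi qIdx_not_low, qIdx_blk hn]

end


lemma diagB_low {i j : Fin (n+1)} (h : (i:ℕ) < n - 1 ∨ (j:ℕ) < n - 1)
    (B : Matrix (Fin 2) (Fin 2) ℂ) :
    diagB n B i j = if i = j then 1 else 0 := dif_pos h

lemma corner_low {i j : Fin (n+1)} (h : (i:ℕ) < n - 1 ∨ (j:ℕ) < n - 1)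
    (M : Matrix (Fin 2) (Fin 2) ℂ) :
    corner n M i j = 0 := dif_pos h

noncomputable def eta2 : Matrix (Fin 2) (Fin 2) ℂ := !![1,0;0,-1]
noncomputable def X2 : Matrix (Fin 2) (Fin 2) ℂ := !![0,1/2;1/2,0]
noncomputable def V2 : Matrix (Fin 2) (Fin 2) ℂ := !![Complex.I/2,0;0,-Complex.I/2]

lemma etaMat_eq (hn : 1 ≤ n) : etaMat n = diagB n eta2 := by
  ext i j
  rw [etaMat, Matrix.diagonal_apply]
  by_cases h : (i:ℕ) < n - 1 ∨ (j:ℕ) < n - 1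
  · rw [diagB_low h]
    by_cases hij : i = j
    · subst hij
      rw [if_pos rfl, if_pos rfl, if_neg (by omega)]
    · rw [if_neg hij, if_neg hij]
  · rw [not_or] at h
    rw [diagB_hi h.1 h.2]
    have hi' := i.isLt; have hj' := j.isLt
    have hi : (i:ℕ) = n - 1 ∨ (i:ℕ) = n := by omega
    have hj : (j:ℕ) = n - 1 ∨ (j:ℕ) = n := by omega
    rcases hi with hi | hi <;> rcases hj with hj | hj
    · rw [if_pos (Fin.ext (by omega)), if_neg (by omega)]
      have e1 : (⟨(i:ℕ) - (n-1), by omega⟩ : Fin 2) = 0 := Fin.ext (by simp; omega)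
      have e2 : (⟨(j:ℕ) - (n-1), by omega⟩ : Fin 2) = 0 := Fin.ext (by simp; omega)
      rw [e1, e2]; simp [eta2]
    · rw [if_neg (by simp [Fin.ext_iff]; omega)]
      have e1 : (⟨(i:ℕ) - (n-1), by omega⟩ : Fin 2) = 0 := Fin.ext (by simp; omega)
      have e2 : (⟨(j:ℕ) - (n-1), by omega⟩ : Fin 2) = 1 := Fin.ext (by simp; omega)
      rw [e1, e2]; simp [eta2]
    · rw [if_neg (by simp [Fin.ext_iff]; omega)]
      have e1 : (⟨(i:ℕ) - (n-1), by omega⟩ : Fin 2) = 1 := Fin.ext (by simp; omega)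
      have e2 : (⟨(j:ℕ) - (n-1), by omega⟩ : Fin 2) = 0 := Fin.ext (by simp; omega)
      rw [e1, e2]; simp [eta2]
    · rw [if_pos (Fin.ext (by omega)), if_pos (by omega)]
      have e1 : (⟨(i:ℕ) - (n-1), by omega⟩ : Fin 2) = 1 := Fin.ext (by simp; omega)
      have e2 : (⟨(j:ℕ) - (n-1), by omega⟩ : Fin 2) = 1 := Fin.ext (by simp; omega)
      rw [e1, e2]; simp [eta2]

lemma Xlam_eq (hn : 1 ≤ n) (lam : ℂ) :
    Xmat n + lam • Vmat n = corner n (X2 + lam • V2) := by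
  ext i j
  rw [Matrix.add_apply, Matrix.smul_apply, Xmat, Vmat, Matrix.diagonal_apply]
  by_cases h : (i:ℕ) < n - 1 ∨ (j:ℕ) < n - 1
  · rw [corner_low h]
    rcases h with h | h
    · rw [if_neg (by omega), if_neg (by omega)]
      by_cases hij : i = j
      · subst hij; rw [if_pos rfl, if_neg (by omega), if_neg (by omega)]; simp
      · rw [if_neg hij]; simp
    · rw [if_neg (by omega), if_neg (by omega)]
      by_cases hij : i = j
      · subst hij; rw [if_pos rfl, if_neg (by omega), if_neg (by omega)]; simp
      · rw [if_neg hij]; simp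
  · rw [not_or] at h
    rw [corner_hi h.1 h.2]
    have hi' := i.isLt; have hj' := j.isLt
    have hi : (i:ℕ) = n - 1 ∨ (i:ℕ) = n := by omega
    have hj : (j:ℕ) = n - 1 ∨ (j:ℕ) = n := by omega
    have hn1 : n - 1 ≠ n := by omega
    rcases hi with hi | hi <;> rcases hj with hj | hj
    · have e1 : (⟨(i:ℕ) - (n-1), by omega⟩ : Fin 2) = 0 := Fin.ext (by simp; omega)
      have e2 : (⟨(j:ℕ) - (n-1), by omega⟩ : Fin 2) = 0 := Fin.ext (by simp; omega)
      rw [e1, e2, if_neg (by omega), if_neg (by omega), if_pos (Fin.ext (by omega)),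
        if_pos hi]
      simp [X2, V2]
    · have e1 : (⟨(i:ℕ) - (n-1), by omega⟩ : Fin 2) = 0 := Fin.ext (by simp; omega)
      have e2 : (⟨(j:ℕ) - (n-1), by omega⟩ : Fin 2) = 1 := Fin.ext (by simp; omega)
      rw [e1, e2, if_pos ⟨hi, hj⟩, if_neg (by simp [Fin.ext_iff]; omega)]
      simp [X2, V2]
    · have e1 : (⟨(i:ℕ) - (n-1), by omega⟩ : Fin 2) = 1 := Fin.ext (by simp; omega)
      have e2 : (⟨(j:ℕ) - (n-1), by omega⟩ : Fin 2) = 0 := Fin.ext (by simp; omega)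
      rw [e1, e2, if_neg (by omega), if_pos ⟨hi, hj⟩, if_neg (by simp [Fin.ext_iff]; omega)]
      simp [X2, V2]
    · have e1 : (⟨(i:ℕ) - (n-1), by omega⟩ : Fin 2) = 1 := Fin.ext (by simp; omega)
      have e2 : (⟨(j:ℕ) - (n-1), by omega⟩ : Fin 2) = 1 := Fin.ext (by simp; omega)
      rw [e1, e2, if_neg (by omega), if_neg (by omega), if_pos (Fin.ext (by omega)),
        if_neg (by omega), if_pos hi]
      simp [X2, V2]

lemma Xmat_eq (hn : 1 ≤ n) : Xmat n = corner n X2 := by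
  have := Xlam_eq (n := n) hn 0
  simpa using this


section
variable {n : ℕ}
lemma block_facts (lam s a b : ℝ)
    (h1 : lam * a = (1+s)*b) (h2 : lam * b = (1-s)*a) (h3 : a^2 - b^2 = 1) :
    (!![(a:ℂ), -(I*b); I*b, (a:ℂ)] * !![(a:ℂ), I*b; -(I*b), (a:ℂ)] = 1) ∧
    (!![(a:ℂ), I*b; -(I*b), (a:ℂ)] * !![(a:ℂ), -(I*b); I*b, (a:ℂ)] = 1) ∧
    ((!![(a:ℂ), I*b; -(I*b), (a:ℂ)])ᴴ * eta2 * !![(a:ℂ), I*b; -(I*b), (a:ℂ)] = eta2) ∧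
    ((X2 + (lam:ℂ) • V2) * !![(a:ℂ), I*b; -(I*b), (a:ℂ)]
        = (s:ℂ) • (!![(a:ℂ), I*b; -(I*b), (a:ℂ)] * X2)) := by
  have hc1 : (lam:ℂ) * a = (1+(s:ℂ))*b := by exact_mod_cast congrArg Complex.ofReal h1
  have hc2 : (lam:ℂ) * b = (1-(s:ℂ))*a := by exact_mod_cast congrArg Complex.ofReal h2
  have hc3 : (a:ℂ)^2 - (b:ℂ)^2 = 1 := by exact_mod_cast congrArg Complex.ofReal h3
  refine ⟨?_, ?_, ?_, ?_⟩ <;>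
    · ext i j
      fin_cases i <;> fin_cases j <;>
        simp [eta2, X2, V2, Matrix.mul_apply, Fin.sum_univ_two, Matrix.conjTranspose_apply,
          Matrix.one_apply, Complex.conj_ofReal] <;>
        first
          | ring1
          | linear_combination hc3 + (b:ℂ)^2 * Complex.I_sq
          | linear_combination -hc3 - (b:ℂ)^2 * Complex.I_sq
          | linear_combination hc3 - (b:ℂ)^2 * Complex.I_sq
          | linear_combination -hc3 + (b:ℂ)^2 * Complex.I_sq
          | linear_combination (Complex.I/2) * hc1
          | linear_combination (-(Complex.I)/2) * hc1
          | linear_combination (-(1:ℂ)/2) * hc2 + ((lam:ℂ)*(b:ℂ)/2) * Complex.I_sq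
          | linear_combination ((1:ℂ)/2) * hc2 - ((lam:ℂ)*(b:ℂ)/2) * Complex.I_sq


/-- For every real `λ` with `|λ| < 1` there exists `c ∈ U(n,1)` of block-diagonal form
`c = diag(I_{n−1}, B)` (hence commuting with every `diag(A,1,1)` with `A` unitary) such that
`c⁻¹ X_λ c = √(1−λ²) · X`. -/
theorem exists_conjugating_c (n : ℕ) (hn : 1 ≤ n) (lam : ℝ) (hlam : |lam| < 1) :
    ∃ c : Matrix (Fin (n+1)) (Fin (n+1)) ℂ,
      cᴴ * etaMat n * c = etaMat n ∧
      (∃ B : Matrix (Fin 2) (Fin 2) ℂ, c = diagB n B) ∧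
      (∀ A : Matrix (Fin (n-1)) (Fin (n-1)) ℂ, A ∈ Matrix.unitaryGroup (Fin (n-1)) ℂ →
        c * diagA n A = diagA n A * c) ∧
      c⁻¹ * (Xmat n + (lam : ℂ) • Vmat n) * c = ((Real.sqrt (1 - lam^2) : ℝ) : ℂ) • Xmat n := by
  have hl2 : lam^2 < 1 := by rw [← _root_.sq_abs]; nlinarith [abs_nonneg lam]
  have hpos : (0:ℝ) < 1 - lam^2 := by linarith
  set s : ℝ := Real.sqrt (1 - lam^2) with hsdef
  have hs : 0 < s := Real.sqrt_pos.mpr hpos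
  have hs2 : s^2 = 1 - lam^2 := Real.sq_sqrt (by linarith)
  have h1s : (0:ℝ) < 1 + s := by linarith
  obtain ⟨a, ha2⟩ : ∃ a : ℝ, a^2 = (1+s)/(2*s) :=
    ⟨Real.sqrt ((1+s)/(2*s)), Real.sq_sqrt (by positivity)⟩
  obtain ⟨b, hbdef⟩ : ∃ b : ℝ, b = lam * a / (1+s) := ⟨_, rfl⟩
  have hr1 : lam * a = (1+s)*b := by rw [hbdef]; field_simp
  have hr2 : lam * b = (1-s)*a := by
    rw [hbdef]; field_simp; linear_combination a * hs2
  have key : (1+s)*b^2 = (1-s)*a^2 := by linear_combination a * hr2 - b * hr1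
  have ha2' : a^2 * (2*s) = 1+s := by rw [ha2]; field_simp
  have hr3 : a^2 - b^2 = 1 := by
    have hcan : (a^2 - b^2) * (1+s) = 1 * (1+s) := by linear_combination ha2' - key
    exact mul_right_cancel₀ (by positivity) hcan
  obtain ⟨h1, h2, h3, h4⟩ := block_facts lam s a b hr1 hr2 hr3
  refine ⟨diagB n (!![(a:ℂ), I*b; -(I*b), (a:ℂ)]), ?_, ⟨_, rfl⟩,
    fun A _ => diagB_comm_diagA hn _ A, ?_⟩
  · rw [diagB_conjT, etaMat_eq hn, diagB_mul_diagB hn, diagB_mul_diagB hn, h3]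
  · have hcinv : (diagB n (!![(a:ℂ), I*b; -(I*b), (a:ℂ)]))⁻¹
        = diagB n (!![(a:ℂ), -(I*b); I*b, (a:ℂ)]) :=
      Matrix.inv_eq_left_inv (by rw [diagB_mul_diagB hn, h1, diagB_one hn])
    have hM : !![(a:ℂ), -(I*b); I*b, (a:ℂ)] * (X2 + (lam:ℂ) • V2)
        * !![(a:ℂ), I*b; -(I*b), (a:ℂ)] = ((s:ℝ):ℂ) • X2 := by
      rw [mul_assoc, h4, Matrix.mul_smul, ← mul_assoc, h1, one_mul]
    rw [hcinv, Xlam_eq hn, diagB_mul_corner hn, corner_mul_diagB hn, hM, corner_smul,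
      ← Xmat_eq hn]

end
end

section
/- Let y ∈ E with ‖y‖ = 1, let a, α ∈ ℝ, and let Z₀, W₀ ∈ E satisfy ⟨Z₀,y⟩ = ⟨Z₀,Jy⟩ = ⟨W₀,y⟩ = ⟨W₀,Jy⟩ = 0. Set Z := a·Jy + Z₀ and W := α·Jy − a·y + W₀. Then ‖W‖² + (1/4)(‖Z‖² − ⟨Z, Jy⟩²) + ⟨J W, Z⟩ = α² + ‖Z₀/2 + J W₀‖². In particular this quantity is nonnegative, and it vanishes if and only if α = 0 and Z₀/2 = −J W₀. -/
open RealInnerProductSpace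

/-- Completed-square identity from the proof of Theorem B: with `Z = a·Jy + Z₀` and
`W = α·Jy − a·y + W₀` (components orthogonal to `y` and `Jy`),
`‖W‖² + (1/4)(‖Z‖² − ⟨Z, Jy⟩²) + ⟨JW, Z⟩ = α² + ‖Z₀/2 + JW₀‖²`; in particular this
quantity is nonnegative, and vanishes iff `α = 0` and `Z₀/2 = −JW₀`. -/
theorem completed_square_identity (E : Type*) [NormedAddCommGroup E] [InnerProductSpace ℝ E]
    (J : E →ₗ[ℝ] E) (hJiso : ∀ x : E, ‖J x‖ = ‖x‖) (hJ2 : ∀ x : E, J (J x) = -x)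
    (y Z₀ W₀ : E) (a α : ℝ) (hy : ‖y‖ = 1)
    (h1 : ⟪Z₀, y⟫ = 0) (h2 : ⟪Z₀, J y⟫ = 0) (h3 : ⟪W₀, y⟫ = 0) (h4 : ⟪W₀, J y⟫ = 0)
    (Z W : E) (hZ : Z = a • J y + Z₀) (hW : W = α • J y - a • y + W₀) :
    ‖W‖^2 + (1/4) * (‖Z‖^2 - ⟪Z, J y⟫^2) + ⟪J W, Z⟫
        = α^2 + ‖(1/2 : ℝ) • Z₀ + J W₀‖^2 ∧
    0 ≤ ‖W‖^2 + (1/4) * (‖Z‖^2 - ⟪Z, J y⟫^2) + ⟪J W, Z⟫ ∧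
    (‖W‖^2 + (1/4) * (‖Z‖^2 - ⟪Z, J y⟫^2) + ⟪J W, Z⟫ = 0 ↔
      α = 0 ∧ (1/2 : ℝ) • Z₀ = -(J W₀)) := by
  -- J preserves inner products
  have hinner : ∀ u v : E, ⟪J u, J v⟫ = ⟪u, v⟫ := by
    intro u v
    have h := real_inner_eq_norm_add_mul_self_sub_norm_mul_self_sub_norm_mul_self_div_two (J u) (J v)
    rw [← map_add, hJiso, hJiso, hJiso,
      ← real_inner_eq_norm_add_mul_self_sub_norm_mul_self_sub_norm_mul_self_div_two] at h
    exact h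
  have hskew : ∀ u v : E, ⟪J u, v⟫ = -⟪u, J v⟫ := by
    intro u v
    have : ⟪J u, J (J v)⟫ = ⟪u, J v⟫ := hinner u (J v)
    rw [hJ2, inner_neg_right] at this
    linarith
  have hyJy : ⟪y, J y⟫ = 0 := by
    have := hskew y y
    have h2 : ⟪J y, y⟫ = ⟪y, J y⟫ := real_inner_comm _ _
    linarith
  have hy2 : ⟪y, y⟫ = 1 := by
    rw [real_inner_self_eq_norm_sq, hy]; norm_num
  have hJy2 : ⟪J y, J y⟫ = 1 := by rw [hinner]; exact hy2
  have hJyy : ⟪J y, y⟫ = 0 := by rw [real_inner_comm]; exact hyJy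
  -- main identity
  have key : ‖W‖^2 + (1/4) * (‖Z‖^2 - ⟪Z, J y⟫^2) + ⟪J W, Z⟫
      = α^2 + ‖(1/2 : ℝ) • Z₀ + J W₀‖^2 := by
    have hWn : ‖W‖^2 = ⟪W, W⟫ := (real_inner_self_eq_norm_sq W).symm
    have hZn : ‖Z‖^2 = ⟪Z, Z⟫ := (real_inner_self_eq_norm_sq Z).symm
    have hVn : ‖(1/2 : ℝ) • Z₀ + J W₀‖^2 = ⟪(1/2 : ℝ) • Z₀ + J W₀, (1/2 : ℝ) • Z₀ + J W₀⟫ :=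
      (real_inner_self_eq_norm_sq _).symm
    have hW0 : ⟪J W₀, J W₀⟫ = ⟪W₀, W₀⟫ := hinner _ _
    have hJWy : ⟪J W₀, y⟫ = -⟪W₀, J y⟫ := hskew _ _
    have hJWJy : ⟪J W₀, J y⟫ = ⟪W₀, y⟫ := hinner _ _
    have hJWZ : ⟪J W₀, Z₀⟫ = -⟪W₀, J Z₀⟫ := hskew _ _
    have hZJW : ⟪Z₀, J W₀⟫ = ⟪J W₀, Z₀⟫ := real_inner_comm _ _
    rw [hWn, hZn, hVn, hZ, hW]
    simp only [map_add, map_sub, map_smul, hJ2, inner_add_left, inner_add_right,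
      inner_sub_left, inner_sub_right, inner_neg_left, inner_neg_right,
      real_inner_smul_left, real_inner_smul_right, smul_neg,
      real_inner_comm Z₀ y, real_inner_comm W₀ y, real_inner_comm Z₀ (J y),
      real_inner_comm W₀ (J y),
      h1, h2, h3, h4, hy2, hJy2, hyJy, hJyy,
      hW0, hJWy, hJWJy, hJWZ, hZJW]
    ring
  refine ⟨key, ?_, ?_⟩
  · rw [key]; positivity
  · rw [key]
    constructor
    · intro h
      have hα : α = 0 := by nlinarith [sq_nonneg α, sq_nonneg (‖(1/2 : ℝ) • Z₀ + J W₀‖), sq_abs α]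
      have hv : ‖(1/2 : ℝ) • Z₀ + J W₀‖ = 0 := by
        nlinarith [norm_nonneg ((1/2 : ℝ) • Z₀ + J W₀), sq_nonneg α]
      have hv0 : (1/2 : ℝ) • Z₀ + J W₀ = 0 := norm_eq_zero.mp hv
      exact ⟨hα, by linear_combination (norm := module) hv0⟩
    · rintro ⟨hα, hv⟩
      have : (1/2 : ℝ) • Z₀ + J W₀ = 0 := by rw [hv]; simp
      rw [hα, this]; simp
end
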